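/- arXiv:2002.02179 — 4 statements merged into one kernel-verified Lean document; each statement's English description precedes it below -/
import Mathlib

section
/- Hadamard's inequality: for a real n × n matrix A, |det A| is at most the product over the rows of their Euclidean (ℓ²) norms. -/
/-!
Gram–Schmidt applied to the rows `v i` yields an orthonormal basis `c` in which the matrix of the
family `v` is upper triangular with diagonal entries `⟪c i, v i⟫`, each of norm at most `‖v i‖`
by Cauchy–Schwarz. Any other orthonormal basis differs from `c` by a unitary change of basis,
whose determinant has norm one.
-/

open Module InnerProductSpace

variable {𝕜 E : Type*} [RCLike 𝕜] [NormedAddCommGroup E] [InnerProductSpace 𝕜 E]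

namespace OrthonormalBasis

theorem norm_det_le_prod_norm_of_linearOrder {ι : Type*} [LinearOrder ι] [LocallyFiniteOrderBot ι]
    [WellFoundedLT ι] [Fintype ι] (b : OrthonormalBasis ι 𝕜 E) (v : ι → E) :
    ‖b.toBasis.det v‖ ≤ ∏ i, ‖v i‖ := by
  have : FiniteDimensional 𝕜 E := b.toBasis.finiteDimensional_of_finite
  let c := gramSchmidtOrthonormalBasis (finrank_eq_card_basis b.toBasis) v
  have h_det : b.toBasis.det v = b.toBasis.det c * c.toBasis.det v :=
    DFunLike.congr_fun (AlternatingMap.eq_smul_basis_det c.toBasis b.toBasis.det) v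
  calc ‖b.toBasis.det v‖ = ∏ i, ‖⟪c i, v i⟫_𝕜‖ := by
        rw [h_det, norm_mul, det_to_matrix_orthonormalBasis, one_mul,
          gramSchmidtOrthonormalBasis_det, norm_prod]
    _ ≤ ∏ i, ‖v i‖ := by
        gcongr with i
        simpa [c.orthonormal.1 i] using norm_inner_le_norm (𝕜 := 𝕜) (c i) (v i)

theorem norm_det_le_prod_norm {ι : Type*} [Fintype ι] [DecidableEq ι]
    (b : OrthonormalBasis ι 𝕜 E) (v : ι → E) : ‖b.toBasis.det v‖ ≤ ∏ i, ‖v i‖ := by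
  let e := Fintype.equivFin ι
  have h := (b.reindex e).norm_det_le_prod_norm_of_linearOrder (v ∘ e.symm)
  rw [reindex_toBasis, Basis.det_reindex, Function.comp_assoc, e.symm_comp_self,
    Function.comp_id] at h
  exact h.trans_eq (e.symm.prod_comp fun i => ‖v i‖)

end OrthonormalBasis

theorem Matrix.norm_det_le_prod_norm_row {ι : Type*} [Fintype ι] [DecidableEq ι]
    (A : Matrix ι ι 𝕜) : ‖A.det‖ ≤ ∏ i, ‖(WithLp.toLp 2 (A i) : EuclideanSpace 𝕜 ι)‖ := by
  have h_det :
      (EuclideanSpace.basisFun ι 𝕜).toBasis.det (fun i => WithLp.toLp 2 (A i)) = A.det := by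
    rw [Basis.det_apply, ← Matrix.det_transpose]
    rfl
  simpa [h_det] using
    (EuclideanSpace.basisFun ι 𝕜).norm_det_le_prod_norm fun i => WithLp.toLp 2 (A i)

/-- Hadamard's inequality: for a real `n × n` matrix `A`, `|det A|` is at most
the product over the rows of their Euclidean (ℓ²) norms. -/
theorem hadamard_inequality (n : ℕ) (A : Matrix (Fin n) (Fin n) ℝ) :
    |A.det| ≤ ∏ i, Real.sqrt (∑ j, (A i j) ^ 2) := by
  simpa [EuclideanSpace.norm_eq] using A.norm_det_le_prod_norm_row
end

section
/- A free product of two residually finite groups is residually finite. -/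
/-- A group is residually finite if every non-identity element is detected by
a homomorphism to some finite group. -/
def ResiduallyFinite (G : Type*) [Group G] : Prop :=
  ∀ g : G, g ≠ 1 → ∃ (H : Type) (_ : Group H) (_ : Finite H) (φ : G →* H),
    φ g ≠ 1

/-!
Let `g ≠ 1` have reduced word `x₁ ⋯ xₙ`. Choose finite quotients of the factors in which every
letter `xₖ` survives; the image of `g` is then a nonempty reduced word in a free product of finite
groups. Such a free product acts on the finite set of reduced words of length at most `n`: a factor
acts as it does on all reduced words, except that it fixes the words it would make too long. The
image of `g` carries the empty word to `x₁ ⋯ xₙ`, so it is detected by a finite permutation group.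
-/

namespace Monoid.CoprodI

variable {ι : Type*} {M : ι → Type*} [∀ i, Monoid (M i)]

namespace Word

variable {N : ι → Type*} [∀ i, Monoid (N i)]

def map (φ : ∀ i, M i →* N i) (w : Word M) (hw : ∀ l ∈ w.toList, φ l.1 l.2 ≠ 1) : Word N where
  toList := w.toList.map fun l => ⟨l.1, φ l.1 l.2⟩
  ne_one := by
    simp only [List.mem_map]
    rintro _ ⟨l, hl, rfl⟩
    exact hw l hl
  chain_ne := (List.isChain_map _).2 w.chain_ne

theorem prod_map (φ : ∀ i, M i →* N i) (w : Word M) (hw : ∀ l ∈ w.toList, φ l.1 l.2 ≠ 1) :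
    (w.map φ hw).prod = lift (fun i => of.comp (φ i)) w.prod := by
  simp [prod, map, map_list_prod, Function.comp_def]

variable [∀ i, DecidableEq (M i)]

theorem length_rcons_le {i : ι} (p : Pair M i) :
    (rcons p).toList.length ≤ p.tail.toList.length + 1 := by
  unfold rcons
  split <;> simp

theorem prod_eq_one_iff [DecidableEq ι] {w : Word M} : w.prod = 1 ↔ w = empty :=
  ⟨fun h => equiv.symm.injective (h.trans prod_empty.symm), by rintro rfl; rfl⟩

end Word

variable (M) in
@[ext]
structure BoundedWord (L : ℕ) where
  toWord : Word M
  length_le : toWord.toList.length ≤ L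

namespace BoundedWord

variable {L : ℕ}

instance [Finite ι] [∀ i, Finite (M i)] : Finite (BoundedWord M L) :=
  have := (List.finite_length_le (Σ i, M i) L).to_subtype
  Finite.of_injective
    (fun w : BoundedWord M L =>
      (⟨w.toWord.toList, w.length_le⟩ : {l : List (Σ i, M i) | l.length ≤ L}))
    fun _ _ h => BoundedWord.ext (Word.ext (congrArg Subtype.val h))

def empty : BoundedWord M L := ⟨Word.empty, Nat.zero_le _⟩

variable [DecidableEq ι] [∀ i, DecidableEq (M i)]

/- Whether `M i` moves `w` depends only on the tail of `w` after its `M i`-letter, which `M i`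
does not change: this is what makes the truncated action an action. -/
instance (i : ι) : SMul (M i) (BoundedWord M L) where
  smul m w :=
    if h : (Word.equivPair i w.toWord).tail.toList.length < L then
      ⟨m • w.toWord, (Word.length_rcons_le _).trans h⟩
    else w

variable {i : ι} {m : M i} {w : BoundedWord M L}

theorem toWord_smul_of_lt (h : (Word.equivPair i w.toWord).tail.toList.length < L) :
    (m • w).toWord = m • w.toWord := by
  change (dite _ _ _ : BoundedWord M L).toWord = _
  rw [dif_pos h]

theorem smul_of_not_lt (h : ¬(Word.equivPair i w.toWord).tail.toList.length < L) : m • w = w :=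
  dif_neg h

instance summandAction (i : ι) : MulAction (M i) (BoundedWord M L) where
  one_smul w := by
    by_cases h : (Word.equivPair i w.toWord).tail.toList.length < L
    · exact BoundedWord.ext ((toWord_smul_of_lt h).trans (one_smul _ _))
    · exact smul_of_not_lt h
  mul_smul m m' w := by
    by_cases h : (Word.equivPair i w.toWord).tail.toList.length < L
    · have h' : (Word.equivPair i (m' • w).toWord).tail.toList.length < L := by
        rwa [toWord_smul_of_lt h, Word.smul_eq_of_smul, Word.equivPair_smul_same]
      refine BoundedWord.ext ?_
      rw [toWord_smul_of_lt h, toWord_smul_of_lt h', toWord_smul_of_lt h, mul_smul]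
    · rw [smul_of_not_lt h, smul_of_not_lt h, smul_of_not_lt h]

instance : MulAction (CoprodI M) (BoundedWord M L) :=
  MulAction.ofEndHom (lift fun _ => MulAction.toEndHom)

theorem prod_smul_empty (w : Word M) (hw : w.toList.length ≤ L) :
    w.prod • (empty : BoundedWord M L) = ⟨w, hw⟩ := by
  induction w using Word.consRecOn with
  | empty => exact one_smul _ _
  | cons i m w h1 h2 ih =>
    have hwL : w.toList.length < L := hw
    rw [Word.prod_cons, mul_smul, ih hwL.le]
    have htail : (Word.equivPair i w).tail.toList.length < L := by
      rwa [Word.equivPair_eq_of_fstIdx_ne h1]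
    exact BoundedWord.ext
      ((toWord_smul_of_lt htail).trans (Word.cons_eq_smul (h1 := h1) (h2 := h2)).symm)

end BoundedWord

end Monoid.CoprodI

namespace Group

variable {G : Type*} [Group G]

theorem exists_finiteIndexNormalSubgroup_forall_notMem [ResiduallyFinite G] {s : Set G}
    (hs : s.Finite) (h1 : 1 ∉ s) : ∃ N : FiniteIndexNormalSubgroup G, ∀ g ∈ s, g ∉ N := by
  choose K hK using fun g : s =>
    exists_finiteIndexNormalSubgroup_notMem g.1 (ne_of_mem_of_not_mem g.2 h1)
  have := hs.to_subtype
  have := Subgroup.normal_iInf_normal fun g : s => (K g).isNormal'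
  have := Subgroup.finiteIndex_iInf fun g : s => (K g).isFiniteIndex'
  exact ⟨.ofSubgroup (⨅ g : s, (K g).toSubgroup),
    fun g hg hgN => hK ⟨g, hg⟩ (Subgroup.mem_iInf.1 hgN ⟨g, hg⟩)⟩

theorem residuallyFinite_of_forall_exists_monoidHom
    (h : ∀ g : G, g ≠ 1 → ∃ (H : Type*) (_ : Group H) (_ : ResiduallyFinite H) (f : G →* H),
      f g ≠ 1) :
    ResiduallyFinite G := by
  refine residuallyFinite_iff_exists_finiteIndexNormalSubgroup.2 fun g hg => ?_
  obtain ⟨H, _, _, f, hfg⟩ := h g hg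
  obtain ⟨K, hK⟩ := exists_finiteIndexNormalSubgroup_notMem (f g) hfg
  exact ⟨K.comap f, hK⟩

end Group

namespace Monoid.CoprodI

variable {ι : Type*} {G : ι → Type*} [∀ i, Group (G i)] [Finite ι]

theorem residuallyFinite_of_finite [∀ i, Finite (G i)] : Group.ResiduallyFinite (CoprodI G) := by
  classical
  refine Group.residuallyFinite_of_forall_exists_finite_monoidHom fun g hg => ?_
  set w := Word.equiv g
  have hg_eq : w.prod = g := Word.equiv.symm_apply_apply g
  refine ⟨Equiv.Perm (BoundedWord G w.toList.length), inferInstance, inferInstance,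
    MulAction.toPermHom _ _, fun h => hg ?_⟩
  have hw : (⟨w, le_rfl⟩ : BoundedWord G w.toList.length) = BoundedWord.empty := by
    rw [← BoundedWord.prod_smul_empty, hg_eq]
    exact congrArg (fun σ : Equiv.Perm _ => σ BoundedWord.empty) h
  rw [← hg_eq, Word.prod_eq_one_iff]
  exact congrArg BoundedWord.toWord hw

instance [∀ i, Group.ResiduallyFinite (G i)] : Group.ResiduallyFinite (CoprodI G) := by
  classical
  refine Group.residuallyFinite_of_forall_exists_monoidHom fun g hg => ?_
  set w := Word.equiv g
  have hg_eq : w.prod = g := Word.equiv.symm_apply_apply g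
  choose N hN using fun i => Group.exists_finiteIndexNormalSubgroup_forall_notMem
    (w.toList.finite_toSet.preimage sigma_mk_injective.injOn : {x : G i | ⟨i, x⟩ ∈ w.toList}.Finite)
    (fun h => w.ne_one _ h rfl)
  let φ i : G i →* G i ⧸ (N i).toSubgroup := QuotientGroup.mk' _
  have hφ : ∀ l ∈ w.toList, φ l.1 l.2 ≠ 1 := fun l hl => by
    simpa [φ, FiniteIndexNormalSubgroup.mem_toSubgroup_iff] using hN l.1 l.2 hl
  refine ⟨CoprodI fun i => G i ⧸ (N i).toSubgroup, inferInstance, residuallyFinite_of_finite,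
    lift fun i => of.comp (φ i), ?_⟩
  rw [← hg_eq, ← Word.prod_map φ w hφ, Ne, Word.prod_eq_one_iff]
  intro h
  have hw : w = Word.empty := Word.ext (List.map_eq_nil_iff.1 (congrArg Word.toList h))
  exact hg (by rw [← hg_eq, hw, Word.prod_empty])

end Monoid.CoprodI

namespace Monoid.Coprod

open CoprodI

universe u

variable {G H : Type u} [Group G] [Group H]

instance instGroupCond : ∀ b : Bool, Group (cond b G H)
  | true => ‹_›
  | false => ‹_›

variable (G H) in
def mulEquivCoprodI : G ∗ H ≃* CoprodI fun b : Bool => cond b G H :=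
  MonoidHom.toMulEquiv
    (lift (of (M := fun b : Bool => cond b G H) (i := true))
      (of (M := fun b : Bool => cond b G H) (i := false)))
    (CoprodI.lift fun | true => inl | false => inr)
    (hom_ext (MonoidHom.ext fun _ => by simp) (MonoidHom.ext fun _ => by simp))
    (CoprodI.ext_hom _ _ fun
      | true => MonoidHom.ext fun _ => by simp
      | false => MonoidHom.ext fun _ => by simp)

instance [Group.ResiduallyFinite G] [Group.ResiduallyFinite H] :
    Group.ResiduallyFinite (G ∗ H) := by
  have : ∀ b : Bool, Group.ResiduallyFinite (cond b G H)
    | true => ‹_›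
    | false => ‹_›
  exact Group.residuallyFinite_of_forall_exists_monoidHom fun g hg =>
    ⟨_, _, inferInstance, (mulEquivCoprodI G H).toMonoidHom, by simpa using hg⟩

end Monoid.Coprod

theorem residuallyFinite_iff_group_residuallyFinite {G : Type} [Group G] :
    ResiduallyFinite G ↔ Group.ResiduallyFinite G := by
  refine ⟨Group.residuallyFinite_of_forall_exists_finite_monoidHom, fun _ g hg => ?_⟩
  obtain ⟨N, hN⟩ := Group.exists_finiteIndexNormalSubgroup_notMem g hg
  exact ⟨G ⧸ N.toSubgroup, inferInstance, inferInstance, QuotientGroup.mk' _,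
    by simpa [FiniteIndexNormalSubgroup.mem_toSubgroup_iff] using hN⟩

/-- A free product of two residually finite groups is residually finite. -/
theorem freeProduct_residuallyFinite (G H : Type) [Group G] [Group H]
    (hG : ResiduallyFinite G) (hH : ResiduallyFinite H) :
    ResiduallyFinite (Monoid.Coprod G H) := by
  rw [residuallyFinite_iff_group_residuallyFinite] at hG hH ⊢
  infer_instance
end

section
/- Every finitely generated linear group over a field is residually finite (Malcev's theorem). -/
open Matrix

theorem Int.jacobson_bot : (⊥ : Ideal ℤ).jacobson = ⊥ := by
  refine le_bot_iff.mp fun x hx ↦ ?_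
  have h₁ := Int.isUnit_iff.mp (Ideal.mem_jacobson_bot.mp hx 1)
  have h₂ := Int.isUnit_iff.mp (Ideal.mem_jacobson_bot.mp hx (-1))
  rw [Ideal.mem_bot]
  omega

instance Int.instIsJacobsonRing : IsJacobsonRing ℤ := by
  refine isJacobsonRing_iff_prime_eq.mpr fun {P} hP ↦ ?_
  rcases eq_or_ne P ⊥ with rfl | hP₀
  · exact Int.jacobson_bot
  · have := hP.isMaximal hP₀
    exact Ideal.jacobson_eq_self_of_isMaximal

theorem finite_of_finiteType_int (F : Type*) [Field F] [Algebra.FiniteType ℤ F] : Finite F := by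
  have : Module.Finite ℤ F := finite_of_finite_type_of_isJacobsonRing ℤ F
  obtain ⟨p, hp⟩ := CharP.exists F
  rcases CharP.char_is_prime_or_zero F p with hprime | rfl
  · have := Fact.mk hprime
    let := ZMod.algebra F p
    have : Module.Finite (ZMod p) F := Module.Finite.of_restrictScalars_finite ℤ _ _
    exact Module.finite_of_finite (ZMod p)
  · -- `F` would be a field integral over `ℤ ⊆ F`, forcing `ℤ` to be a field
    have := CharP.charP_to_charZero F
    exact absurd ((Algebra.IsIntegral.isField_iff_isField (algebraMap ℤ F).injective_int).mpr
      (Field.toIsField F)) Int.not_isField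

theorem Ideal.exists_isMaximal_notMem_of_ne_zero {R : Type*} [CommRing R] [IsJacobsonRing R]
    [IsReduced R] {r : R} (hr : r ≠ 0) : ∃ m : Ideal R, m.IsMaximal ∧ r ∉ m := by
  have hjac : (⊥ : Ideal R).jacobson = ⊥ := by
    rw [← Ideal.radical_eq_jacobson, Ideal.radical_bot_of_isReduced]
  by_contra! h
  exact hr <| (Ideal.mem_bot).mp <| hjac ▸ Ideal.mem_sInf.mpr fun J hJ ↦ h J hJ.2

theorem Ideal.exists_finite_quotient_notMem_of_ne_zero {R : Type*} [CommRing R] [IsReduced R]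
    [Algebra.FiniteType ℤ R] {r : R} (hr : r ≠ 0) :
    ∃ I : Ideal R, Finite (R ⧸ I) ∧ r ∉ I := by
  have : IsJacobsonRing R := isJacobsonRing_of_finiteType (A := ℤ)
  obtain ⟨m, hm, hrm⟩ := Ideal.exists_isMaximal_notMem_of_ne_zero hr
  let := Ideal.Quotient.field m
  exact ⟨m, @finite_of_finiteType_int _ _
    (.of_surjective (Ideal.Quotient.mk m).toIntAlgHom Ideal.Quotient.mk_surjective), hrm⟩

theorem ResiduallyFinite.of_injective {G H : Type*} [Group G] [Group H] (hH : ResiduallyFinite H)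
    (f : G →* H) (hf : Function.Injective f) : ResiduallyFinite G := fun g hg ↦
  let ⟨K, _, _, ψ, hψ⟩ := hH (f g) ((map_ne_one_iff f hf).mpr hg)
  ⟨K, ‹_›, ‹_›, ψ.comp f, hψ⟩

theorem MonoidHom.exists_comp_eq_of_range_le {G H K : Type*} [Group G] [Group H] [Group K]
    {f : H →* K} (hf : Function.Injective f) {φ : G →* K} (h : φ.range ≤ f.range) :
    ∃ ψ : G →* H, f.comp ψ = φ :=
  ⟨(MonoidHom.ofInjective hf).symm.toMonoidHom.comp
    (φ.codRestrict f.range fun g ↦ h ⟨g, rfl⟩),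
    by ext g; simp⟩

theorem Matrix.GeneralLinearGroup.map_injective {n : Type*} [Fintype n] [DecidableEq n]
    {R S : Type*} [CommRing R] [CommRing S] {f : R →+* S} (hf : Function.Injective f) :
    Function.Injective (GeneralLinearGroup.map (n := n) f) := fun _ _ h ↦
  Units.ext <| Matrix.map_injective hf <| congrArg Units.val h

theorem Subalgebra.mem_range_map_val_of_forall_mem {n : Type*} [Fintype n] [DecidableEq n]
    {S k : Type*} [CommRing S] [CommRing k] [Algebra S k] (R : Subalgebra S k) {A : GL n k}
    (hA : ∀ i j, A i j ∈ R) (hA' : ∀ i j, A⁻¹ i j ∈ R) :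
    A ∈ (GeneralLinearGroup.map (R.val : R →+* k)).range := by
  let lift : ∀ B : Matrix n n k, (∀ i j, B i j ∈ R) → Matrix n n R :=
    fun B hB ↦ Matrix.of fun i j ↦ ⟨B i j, hB i j⟩
  have hval : Function.Injective (R.val : R →+* k).mapMatrix :=
    Matrix.map_injective (n := n) Subtype.val_injective
  refine ⟨⟨lift A hA, lift _ hA', hval ?_, hval ?_⟩, rfl⟩
  · rw [map_mul, map_one]
    exact A.mul_inv
  · rw [map_mul, map_one]
    exact A.inv_mul

theorem Matrix.GeneralLinearGroup.residuallyFinite (n R : Type) [Fintype n] [DecidableEq n]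
    [CommRing R] [IsReduced R] [Algebra.FiniteType ℤ R] : ResiduallyFinite (GL n R) := by
  intro A hA
  obtain ⟨i, j, hij⟩ : ∃ i j, A i j - (1 : Matrix n n R) i j ≠ 0 := by
    by_contra! h
    exact hA (Units.ext (Matrix.ext fun i j ↦ sub_eq_zero.mp (h i j)))
  obtain ⟨I, _, hI⟩ := Ideal.exists_finite_quotient_notMem_of_ne_zero hij
  refine ⟨GL n (R ⧸ I), inferInstance, inferInstance, map (Ideal.Quotient.mk I),
    fun h ↦ hI ?_⟩
  rw [← Ideal.Quotient.eq_zero_iff_mem, map_sub, sub_eq_zero]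
  simpa [Matrix.one_apply, apply_ite] using congrArg (fun B : GL n (R ⧸ I) ↦ B i j) h

theorem Matrix.GeneralLinearGroup.exists_fg_subalgebra_range_le {G : Type*} [Group G] [Group.FG G]
    {n k : Type*} [Fintype n] [DecidableEq n] [CommRing k] (φ : G →* GL n k) :
    ∃ R : Subalgebra ℤ k, R.FG ∧ φ.range ≤ (map (R.val : R →+* k)).range := by
  obtain ⟨S, hS⟩ := Group.FG.out (G := G)
  let E : Set k := ⋃ s ∈ S, (Set.range fun p : n × n ↦ φ s p.1 p.2) ∪
    Set.range fun p : n × n ↦ (φ s)⁻¹ p.1 p.2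
  have hE : E.Finite :=
    S.finite_toSet.biUnion fun _ _ ↦ (Set.finite_range _).union (Set.finite_range _)
  refine ⟨Algebra.adjoin ℤ E, Subalgebra.fg_def.mpr ⟨E, hE, rfl⟩, ?_⟩
  rw [φ.range_eq_map, ← hS, MonoidHom.map_closure, Subgroup.closure_le]
  rintro _ ⟨s, hs, rfl⟩
  exact Subalgebra.mem_range_map_val_of_forall_mem _
    (fun i j ↦ Algebra.subset_adjoin (Set.mem_biUnion hs (Or.inl ⟨(i, j), rfl⟩)))
    (fun i j ↦ Algebra.subset_adjoin (Set.mem_biUnion hs (Or.inr ⟨(i, j), rfl⟩)))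

/-- Malcev's theorem: every finitely generated linear group over a field is
residually finite. -/
theorem malcev_linear_residuallyFinite (G : Type) [Group G] (hfg : Group.FG G)
    (k : Type) [Field k] (n : ℕ)
    (φ : G →* Matrix.GeneralLinearGroup (Fin n) k)
    (hφ : Function.Injective φ) :
    ResiduallyFinite G := by
  obtain ⟨R, hR, hle⟩ := GeneralLinearGroup.exists_fg_subalgebra_range_le φ
  have : Algebra.FiniteType ℤ R := R.fg_iff_finiteType.mp hR
  obtain ⟨ψ, rfl⟩ := MonoidHom.exists_comp_eq_of_range_le
    (GeneralLinearGroup.map_injective Subtype.val_injective) hle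
  rw [MonoidHom.coe_comp] at hφ
  exact (GeneralLinearGroup.residuallyFinite (Fin n) R).of_injective ψ hφ.of_comp
end

section
/- A finitely presented residually finite group has solvable word problem. -/
/-- Evaluate a word in the generators (with signs) in a presented group. -/
def evalWord {m : ℕ} (rels : Set (FreeGroup (Fin m)))
    (w : List (Fin m × Bool)) : PresentedGroup rels :=
  (w.map (fun p => if p.2 then PresentedGroup.of p.1
    else (PresentedGroup.of p.1)⁻¹)).prod

open Primrec Encodable
open FreeGroup (mk lift reduce invRev toWord)

theorem ComputablePred.rePred_exists {α β : Type*} [Primcodable α] [Primcodable β]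
    {R : α → β → Prop} (hR : ComputablePred fun p : α × β => R p.1 p.2) :
    REPred fun a => ∃ b, R a b := by
  classical
  have hsearch : Computable₂ fun a n =>
      ((decode (α := β) n).map fun b => decide (R a b)).getD false :=
    (Computable.option_getD ((Computable.decode.comp Computable.snd).option_map
      (hR.decide.comp ((Computable.fst.comp Computable.fst).pair Computable.snd)).to₂)
      (Computable.const false)).to₂
  refine (Partrec.rfind hsearch.partrec₂).dom_re.of_eq fun a => ?_
  simp only [Nat.rfind_dom]
  constructor
  · rintro ⟨n, hn, -⟩
    cases h : decode (α := β) n <;> simp_all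
    exact ⟨_, hn⟩
  · rintro ⟨b, hb⟩
    exact ⟨encode b, by simpa using hb, fun _ => trivial⟩

theorem PrimrecPred.mem_list {α : Type*} [Primcodable α] [DecidableEq α] (L : List α) :
    PrimrecPred fun a => a ∈ L :=
  ((PrimrecRel.exists_mem_list Primrec.eq).comp (const L) Primrec.id).of_eq fun a => by simp

namespace Primrec

variable {α : Type*} [Primcodable α]

theorem freeGroup_reduce [DecidableEq α] :
    Primrec (reduce : List (α × Bool) → List (α × Bool)) := by
  refine (list_rec (h := fun _ (p : (α × Bool) × List (α × Bool) × List (α × Bool)) =>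
      (List.casesOn p.2.2 [p.1] fun hd tl =>
        if p.1.1 = hd.1 ∧ p.1.2 = !hd.2 then tl else p.1 :: hd :: tl : List (α × Bool)))
    Primrec.id (const []) ?_).of_eq fun L => rfl
  refine (list_casesOn (snd.comp (snd.comp snd)) (list_cons.comp (fst.comp snd) (const []))
    (ite ((Primrec.eq.comp (fst.comp (fst.comp (snd.comp fst))) (fst.comp (fst.comp snd))).and
        (Primrec.eq.comp (snd.comp (fst.comp (snd.comp fst)))
          (Primrec.not.comp (snd.comp (fst.comp snd)))))
      (snd.comp snd)
      (list_cons.comp (fst.comp (snd.comp fst))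
        (list_cons.comp (fst.comp snd) (snd.comp snd)))).to₂).to₂.of_eq fun _ p => ?_
  rcases p with ⟨_, _, _ | _⟩ <;> rfl

theorem freeGroup_invRev : Primrec (invRev : List (α × Bool) → List (α × Bool)) :=
  list_reverse.comp (list_map .id (pair (fst.comp snd) (Primrec.not.comp (snd.comp snd))))

end Primrec

theorem List.exists_map_eq_of_forall_mem {β γ : Type*} {p : β → Prop} {f : β → γ} {l : List γ}
    (h : ∀ y ∈ l, ∃ b, p b ∧ f b = y) : ∃ bs : List β, (∀ b ∈ bs, p b) ∧ bs.map f = l := by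
  induction l with
  | nil => exact ⟨[], by simp⟩
  | cons y l ih =>
    obtain ⟨b, hb, rfl⟩ := h y (by simp)
    obtain ⟨bs, hbs, hmap⟩ := ih fun y hy => h y (by simp [hy])
    exact ⟨b :: bs, by simpa [hb] using hbs, by rw [List.map_cons, hmap]⟩

theorem FreeGroup.mk_flatMap {α β : Type*} (f : β → List (α × Bool)) (l : List β) :
    mk (l.flatMap f) = (l.map fun b => mk (f b)).prod := by
  induction l with
  | nil => rfl
  | cons b l ih => rw [List.flatMap_cons, ← FreeGroup.mul_mk, ih, List.map_cons, List.prod_cons]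

theorem Set.Finite.exists_list_words {α : Type*} {rels : Set (FreeGroup α)} (h : rels.Finite) :
    ∃ RL : List (List (α × Bool)), ∀ g, g ∈ rels ↔ ∃ r ∈ RL, mk r = g := by
  classical
  exact ⟨h.toFinset.toList.map toWord, fun g => by simp [FreeGroup.mk_toWord]⟩

theorem exists_monoidHom_perm_fin_injective (H : Type*) [Group H] [Finite H] :
    ∃ (k : ℕ) (π : H →* Equiv.Perm (Fin k)), Function.Injective π := by
  obtain ⟨k, ⟨e⟩⟩ := Finite.exists_equiv_fin H
  exact ⟨k, (Equiv.permCongrHom e).toMonoidHom.comp (MulAction.toPermHom H H),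
    (Equiv.permCongrHom e).injective.comp MulAction.toPerm_injective⟩

theorem ResiduallyFinite.ne_one_iff_exists_perm_fin {G : Type*} [Group G]
    (hG : ResiduallyFinite G) {g : G} :
    g ≠ 1 ↔ ∃ (k : ℕ) (ψ : G →* Equiv.Perm (Fin k)), ψ g ≠ 1 := by
  refine ⟨fun hg => ?_, fun ⟨k, ψ, hψ⟩ hg => hψ (by rw [hg, map_one])⟩
  obtain ⟨H, _, _, φ, hφ⟩ := hG g hg
  obtain ⟨k, π, hπ⟩ := exists_monoidHom_perm_fin_injective H
  exact ⟨k, π.comp φ, fun h => hφ ((injective_iff_map_eq_one π).1 hπ _ h)⟩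

namespace WordProblem

section ConjugateCertificates

variable {α : Type*}

def conjWord (t : List (α × Bool) × List (α × Bool)) : List (α × Bool) :=
  t.1 ++ t.2 ++ invRev t.1

theorem mk_conjWord (t : List (α × Bool) × List (α × Bool)) :
    mk (conjWord t) = mk t.1 * mk t.2 * (mk t.1)⁻¹ := by
  rw [conjWord, ← FreeGroup.mul_mk, ← FreeGroup.mul_mk, FreeGroup.inv_mk]

def IsConjCert [DecidableEq α] (RL : List (List (α × Bool))) (w : List (α × Bool))
    (ts : List (List (α × Bool) × List (α × Bool))) : Prop :=
  (∀ t ∈ ts, t.2 ∈ RL ++ RL.map invRev) ∧ reduce (ts.flatMap conjWord) = reduce w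

variable [DecidableEq α] {rels : Set (FreeGroup α)} {RL : List (List (α × Bool))}

theorem mem_conjugatesOfSet_union_inv_iff (hRL : ∀ g, g ∈ rels ↔ ∃ r ∈ RL, mk r = g)
    {y : FreeGroup α} :
    y ∈ Group.conjugatesOfSet rels ∪ (Group.conjugatesOfSet rels)⁻¹ ↔
      ∃ t : List (α × Bool) × List (α × Bool), t.2 ∈ RL ++ RL.map invRev ∧ mk (conjWord t) = y := by
  simp only [Set.mem_union, Set.mem_inv, Group.mem_conjugatesOfSet_iff, isConj_iff, hRL,
    List.mem_append, List.mem_map]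
  constructor
  · rintro (⟨_, ⟨r, hr, rfl⟩, c, hc⟩ | ⟨_, ⟨r, hr, rfl⟩, c, hc⟩)
    · exact ⟨(toWord c, r), Or.inl hr, by rw [mk_conjWord, FreeGroup.mk_toWord, hc]⟩
    · refine ⟨(toWord c, invRev r), Or.inr ⟨r, hr, rfl⟩, ?_⟩
      rw [mk_conjWord, FreeGroup.mk_toWord, ← FreeGroup.inv_mk, ← inv_inj, ← hc]
      group
  · rintro ⟨⟨c, r⟩, hr | ⟨r, hr, rfl⟩, rfl⟩
    · exact Or.inl ⟨_, ⟨r, hr, rfl⟩, mk c, (mk_conjWord (c, r)).symm⟩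
    · refine Or.inr ⟨_, ⟨r, hr, rfl⟩, mk c, ?_⟩
      rw [mk_conjWord, ← FreeGroup.inv_mk]
      group

theorem mk_mem_normalClosure_iff (hRL : ∀ g, g ∈ rels ↔ ∃ r ∈ RL, mk r = g)
    (w : List (α × Bool)) :
    mk w ∈ Subgroup.normalClosure rels ↔ ∃ ts, IsConjCert RL w ts := by
  have hcl : Subgroup.normalClosure rels = Subgroup.closure (Group.conjugatesOfSet rels) := rfl
  rw [hcl, ← Subgroup.mem_toSubmonoid, Subgroup.closure_toSubmonoid]
  constructor
  · intro hw
    obtain ⟨l, hl, hprod⟩ := Submonoid.exists_list_of_mem_closure hw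
    obtain ⟨ts, hts, rfl⟩ := List.exists_map_eq_of_forall_mem fun y hy =>
      (mem_conjugatesOfSet_union_inv_iff hRL).1 (hl y hy)
    refine ⟨ts, hts, FreeGroup.reduce.sound ?_⟩
    rw [FreeGroup.mk_flatMap, ← hprod]
  · rintro ⟨ts, hts, hred⟩
    rw [← FreeGroup.reduce.exact hred, FreeGroup.mk_flatMap]
    refine Submonoid.list_prod_mem _ fun y hy => ?_
    obtain ⟨t, ht, rfl⟩ := List.mem_map.1 hy
    exact Submonoid.subset_closure ((mem_conjugatesOfSet_union_inv_iff hRL).2 ⟨t, hts t ht, rfl⟩)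

variable [Primcodable α]

theorem primrecRel_isConjCert (RL : List (List (α × Bool))) :
    PrimrecRel (IsConjCert RL) :=
  (((PrimrecPred.mem_list _).comp snd).forall_mem_list.comp snd).and
    (Primrec.eq.comp (freeGroup_reduce.comp (list_flatMap snd
      (list_append.comp (list_append.comp (fst.comp snd) (snd.comp snd))
        (freeGroup_invRev.comp (fst.comp snd))).to₂)) (freeGroup_reduce.comp fst))

theorem rePred_mk_eq_one (hRL : ∀ g, g ∈ rels ↔ ∃ r ∈ RL, mk r = g) :
    REPred fun w : List (α × Bool) => PresentedGroup.mk rels (mk w) = 1 :=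
  (PrimrecPred.computablePred (primrecRel_isConjCert RL)).rePred_exists.of_eq fun w => by
    rw [PresentedGroup.mk_eq_one_iff, mk_mem_normalClosure_iff hRL]

end ConjugateCertificates

section PermCertificates

variable {m k : ℕ}

/-- Row `ρ i` lists the images of `0, 1, …` under generator `i` and under its inverse;
reducing mod `k` makes every table act on `Fin k`, however wrong its entries. -/
def letterAct (k : ℕ) (ρ : Fin m → List ℕ × List ℕ) (a : Fin m × Bool) (x : ℕ) : ℕ :=
  (bif a.2 then (ρ a.1).1 else (ρ a.1).2).getD x 0 % k

def wordAct (k : ℕ) (ρ : Fin m → List ℕ × List ℕ) (u : List (Fin m × Bool)) (x : ℕ) : ℕ :=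
  u.foldr (letterAct k ρ) x

/-- Requiring these words to act trivially forces the rows of a table to be mutually inverse. -/
def inversePairs (m : ℕ) : List (List (Fin m × Bool)) :=
  (List.finRange m).flatMap fun i => [[(i, true), (i, false)], [(i, false), (i, true)]]

def IsPermCert (RL : List (List (Fin m × Bool))) (w : List (Fin m × Bool))
    (c : ℕ × (Fin m → List ℕ × List ℕ)) : Prop :=
  (∀ u ∈ RL ++ inversePairs m, ∀ x < c.1, wordAct c.1 c.2 u x = x) ∧
    ∃ x < c.1, wordAct c.1 c.2 w x ≠ x

def Tabulates (k : ℕ) (ρ : Fin m → List ℕ × List ℕ) (σ : Fin m → Equiv.Perm (Fin k)) : Prop :=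
  ∀ i (x : Fin k), letterAct k ρ (i, true) x = σ i x ∧ letterAct k ρ (i, false) x = (σ i)⁻¹ x

theorem Tabulates.wordAct_eq {ρ : Fin m → List ℕ × List ℕ} {σ : Fin m → Equiv.Perm (Fin k)}
    (h : Tabulates k ρ σ) (u : List (Fin m × Bool)) (x : Fin k) :
    wordAct k ρ u x = lift σ (mk u) x := by
  induction u with
  | nil => simp [wordAct, ← FreeGroup.one_eq_mk]
  | cons a u ih =>
    obtain ⟨i, _ | _⟩ := a <;> simp_all [wordAct, FreeGroup.lift_mk, (h _ _).1, (h _ _).2]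

def tabulate (σ : Fin m → Equiv.Perm (Fin k)) : Fin m → List ℕ × List ℕ :=
  fun i => (List.ofFn fun x => (σ i x : ℕ), List.ofFn fun x => ((σ i)⁻¹ x : ℕ))

theorem tabulates_tabulate (σ : Fin m → Equiv.Perm (Fin k)) : Tabulates k (tabulate σ) σ := by
  intro i x
  simp [letterAct, tabulate, Nat.mod_eq_of_lt]

theorem exists_tabulates {ρ : Fin m → List ℕ × List ℕ}
    (h : ∀ u ∈ inversePairs m, ∀ x < k, wordAct k ρ u x = x) :
    ∃ σ : Fin m → Equiv.Perm (Fin k), Tabulates k ρ σ := by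
  let act (a : Fin m × Bool) (x : Fin k) : Fin k := ⟨letterAct k ρ a x, Nat.mod_lt _ x.pos⟩
  have hinv (i : Fin m) (b : Bool) (x : Fin k) : act (i, b) (act (i, !b) x) = x := by
    apply Fin.ext
    refine h [(i, b), (i, !b)] ?_ x x.isLt
    cases b <;> simp [inversePairs]
  exact ⟨fun i => ⟨act (i, true), act (i, false), hinv i false, hinv i true⟩, fun i x => ⟨rfl, rfl⟩⟩

variable {rels : Set (FreeGroup (Fin m))}

theorem lift_apply_eq_apply_mk {G : Type*} [Group G] (ψ : PresentedGroup rels →* G)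
    (g : FreeGroup (Fin m)) :
    lift (fun i => ψ (PresentedGroup.of i)) g = ψ (PresentedGroup.mk rels g) :=
  (FreeGroup.lift_unique (ψ.comp (PresentedGroup.mk rels)) fun _ => rfl).symm

theorem evalWord_eq_mk (u : List (Fin m × Bool)) :
    evalWord rels u = PresentedGroup.mk rels (mk u) := by
  rw [← MonoidHom.id_apply _ (PresentedGroup.mk rels _), ← lift_apply_eq_apply_mk,
    FreeGroup.lift_mk]
  simp [evalWord, Bool.cond_eq_ite]

theorem exists_perm_ne_one_of_isPermCert {RL : List (List (Fin m × Bool))}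
    (hRL : ∀ g, g ∈ rels ↔ ∃ r ∈ RL, mk r = g) {w : List (Fin m × Bool)}
    {c : ℕ × (Fin m → List ℕ × List ℕ)} (hc : IsPermCert RL w c) :
    ∃ ψ : PresentedGroup rels →* Equiv.Perm (Fin c.1), ψ (evalWord rels w) ≠ 1 := by
  obtain ⟨htriv, x, hx, hw⟩ := hc
  obtain ⟨σ, hσ⟩ := exists_tabulates fun u hu => htriv u (List.mem_append_right _ hu)
  have hrels : ∀ r ∈ rels, lift σ r = 1 := by
    intro r hr
    obtain ⟨u, hu, rfl⟩ := (hRL r).1 hr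
    ext y
    rw [← hσ.wordAct_eq]
    exact htriv u (List.mem_append_left _ hu) y y.isLt
  refine ⟨PresentedGroup.toGroup hrels, fun h => hw ?_⟩
  have hw1 : lift σ (mk w) = 1 := by rwa [evalWord_eq_mk] at h
  simpa [hw1] using hσ.wordAct_eq w ⟨x, hx⟩

theorem isPermCert_tabulate {RL : List (List (Fin m × Bool))}
    (hRL : ∀ g, g ∈ rels ↔ ∃ r ∈ RL, mk r = g) {w : List (Fin m × Bool)}
    (ψ : PresentedGroup rels →* Equiv.Perm (Fin k)) (hψ : ψ (evalWord rels w) ≠ 1) :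
    IsPermCert RL w (k, tabulate fun i => ψ (PresentedGroup.of i)) := by
  obtain ⟨x, hx⟩ : ∃ x, ψ (evalWord rels w) x ≠ x := by
    by_contra! h
    exact hψ (Equiv.ext h)
  have hσ := tabulates_tabulate fun i => ψ (PresentedGroup.of i)
  refine ⟨fun u hu y hy => ?_, x, x.isLt, ?_⟩
  · rw [show y = (⟨y, hy⟩ : Fin k) from rfl, hσ.wordAct_eq]
    rcases List.mem_append.1 hu with hu | hu
    · rw [lift_apply_eq_apply_mk, PresentedGroup.one_of_mem ((hRL _).2 ⟨u, hu, rfl⟩), map_one]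
      rfl
    · obtain ⟨i, -, hu⟩ := List.mem_flatMap.1 hu
      rcases List.mem_pair.1 hu with rfl | rfl <;> simp [FreeGroup.lift_mk]
  · rw [hσ.wordAct_eq, lift_apply_eq_apply_mk, ← evalWord_eq_mk]
    exact fun h => hx (Fin.ext h)

theorem exists_isPermCert_iff {RL : List (List (Fin m × Bool))}
    (hRL : ∀ g, g ∈ rels ↔ ∃ r ∈ RL, mk r = g) (w : List (Fin m × Bool)) :
    (∃ c, IsPermCert RL w c) ↔
      ∃ (k : ℕ) (ψ : PresentedGroup rels →* Equiv.Perm (Fin k)), ψ (evalWord rels w) ≠ 1 :=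
  ⟨fun ⟨c, hc⟩ => ⟨c.1, exists_perm_ne_one_of_isPermCert hRL hc⟩,
    fun ⟨_, ψ, hψ⟩ => ⟨_, isPermCert_tabulate hRL ψ hψ⟩⟩

theorem primrec_wordAct :
    Primrec fun p : (ℕ × (Fin m → List ℕ × List ℕ)) × (List (Fin m × Bool) × ℕ) =>
      wordAct p.1.1 p.1.2 p.2.1 p.2.2 := by
  have hletter : Primrec₂ fun (p : (ℕ × (Fin m → List ℕ × List ℕ)) × (List (Fin m × Bool) × ℕ))
      (q : (Fin m × Bool) × ℕ) => letterAct p.1.1 p.1.2 q.1 q.2 := by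
    have hrow : Primrec fun q : ((ℕ × (Fin m → List ℕ × List ℕ)) × (List (Fin m × Bool) × ℕ)) ×
        ((Fin m × Bool) × ℕ) => q.1.1.2 q.2.1.1 :=
      fin_app.comp (snd.comp (fst.comp fst)) (fst.comp (fst.comp snd))
    exact Primrec.nat_mod.comp ((list_getD 0).comp (Primrec.cond (snd.comp (fst.comp snd))
      (fst.comp hrow) (snd.comp hrow)) (snd.comp snd)) (fst.comp (fst.comp fst))
  exact list_foldr (fst.comp snd) (snd.comp snd) hletter

theorem primrecRel_isPermCert (RL : List (List (Fin m × Bool))) : PrimrecRel (IsPermCert RL) := by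
  have hfix : PrimrecRel fun (x : ℕ) (p : List (Fin m × Bool) × (ℕ × (Fin m → List ℕ × List ℕ))) =>
      wordAct p.2.1 p.2.2 p.1 x = x :=
    Primrec.eq.comp (primrec_wordAct.comp ((snd.comp snd).pair ((fst.comp snd).pair fst))) fst
  have hfixes : PrimrecRel fun (u : List (Fin m × Bool)) (c : ℕ × (Fin m → List ℕ × List ℕ)) =>
      ∀ x < c.1, wordAct c.1 c.2 u x = x :=
    (hfix.forall_mem_list.comp (list_range.comp (fst.comp snd)) Primrec.id).of_eq fun _ => by
      simp only [List.mem_range, id]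
  have hmoves : PrimrecRel fun (w : List (Fin m × Bool)) (c : ℕ × (Fin m → List ℕ × List ℕ)) =>
      ∃ x < c.1, wordAct c.1 c.2 w x ≠ x :=
    (hfix.not.exists_mem_list.comp (list_range.comp (fst.comp snd)) Primrec.id).of_eq fun _ => by
      simp only [List.mem_range, id]
  exact ((hfixes.forall_mem_list.comp (const _) Primrec.id).comp snd).and hmoves

theorem rePred_evalWord_ne_one {RL : List (List (Fin m × Bool))}
    (hRL : ∀ g, g ∈ rels ↔ ∃ r ∈ RL, mk r = g) (hres : ResiduallyFinite (PresentedGroup rels)) :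
    REPred fun w => evalWord rels w ≠ 1 :=
  (PrimrecPred.computablePred (primrecRel_isPermCert RL)).rePred_exists.of_eq fun w => by
    rw [exists_isPermCert_iff hRL, hres.ne_one_iff_exists_perm_fin]

end PermCertificates

end WordProblem

/-- A finitely presented residually finite group has solvable word problem:
the set of words in the generators representing the identity is computable. -/
theorem word_problem_solvable (m : ℕ) (rels : Set (FreeGroup (Fin m)))
    (hrels : rels.Finite)
    (hres : ResiduallyFinite (PresentedGroup rels)) :
    ComputablePred (fun w : List (Fin m × Bool) => evalWord rels w = 1) := by
  obtain ⟨RL, hRL⟩ := hrels.exists_list_words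
  refine ComputablePred.computable_iff_re_compl_re'.2
    ⟨?_, WordProblem.rePred_evalWord_ne_one hRL hres⟩
  exact (WordProblem.rePred_mk_eq_one hRL).of_eq fun w => by rw [WordProblem.evalWord_eq_mk]
end
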